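/- Let Y_x and E_x be functions of x that both tend to infinity as x → ∞. For each positive integer n write n = n₁ n₂ where n₁ is the largest divisor of n all of whose prime factors are ≤ Y_x (so every prime factor of n₂ exceeds Y_x). Then #{n ≤ x : n₁ ≥ Y_x^{E_x}} = o(x) as x → ∞. -/

import Mathlib

open Finset Filter

open scoped Classical in
/-- The `Y`-smooth part of `n`: the largest divisor of `n` all of whose prime
factors are `≤ Y`. -/
noncomputable def smoothPart (Y : ℝ) (n : ℕ) : ℕ :=
  ∏ p ∈ n.primeFactors.filter (fun p : ℕ => (p : ℝ) ≤ Y), p ^ n.factorization p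

/-! Since `∏_{n ≤ x} n₁ = (x!)₁`, Legendre's formula gives
`∑_{n ≤ x} log n₁ = ∑_{p ≤ Y} v_p(x!) log p ≤ 2x ∑_{p ≤ Y} log p / p`, and Mertens' bound
`∑_{p ≤ N} log p / p ≤ log N + log 4` (from `⌊N/p⌋ ≤ v_p(N!)`, `log N! ≤ N log N` and Chebyshev's
`θ(N) ≤ N log 4`) makes this `O(x log Y)`. Each `n` with `n₁ ≥ Y^E` contributes at least `E log Y`,
so there are `O(x / E)` of them. -/

open Real
open scoped Nat

theorem smoothPart_eq_prod_primesLE (Y : ℝ) (n : ℕ) :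
    smoothPart Y n = ∏ p ∈ Nat.primesLE ⌊Y⌋₊, p ^ n.factorization p := by
  have hsub : n.primeFactors.filter (fun p : ℕ => (p : ℝ) ≤ Y) ⊆ Nat.primesLE ⌊Y⌋₊ := by
    intro p hp
    simp only [mem_filter, Nat.mem_primeFactors] at hp
    exact Nat.mem_primesLE.2 ⟨Nat.le_floor hp.2, hp.1.1⟩
  rw [smoothPart]
  refine prod_subset hsub fun p hp hpn => ?_
  obtain ⟨hpY, hprime⟩ := Nat.mem_primesLE.1 hp
  have hpn' : p ∉ n.primeFactors := fun h =>
    hpn (mem_filter.2 ⟨h, (Nat.le_floor_iff' hprime.ne_zero).1 hpY⟩)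
  rw [Finsupp.notMem_support_iff.1 (Nat.support_factorization n ▸ hpn'), pow_zero]

theorem smoothPart_pos (Y : ℝ) (n : ℕ) : 0 < smoothPart Y n := by
  rw [smoothPart_eq_prod_primesLE]
  exact prod_pos fun p hp => pow_pos (Nat.mem_primesLE.1 hp).2.pos _

theorem smoothPart_mul (Y : ℝ) {a b : ℕ} (ha : a ≠ 0) (hb : b ≠ 0) :
    smoothPart Y (a * b) = smoothPart Y a * smoothPart Y b := by
  simp only [smoothPart_eq_prod_primesLE, Nat.factorization_mul ha hb, Finsupp.add_apply, pow_add,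
    prod_mul_distrib]

theorem prod_smoothPart_Icc (Y : ℝ) (x : ℕ) :
    ∏ n ∈ Icc 1 x, smoothPart Y n = smoothPart Y x ! := by
  induction x with
  | zero => simp [smoothPart]
  | succ x ih =>
    rw [prod_Icc_succ_top (by omega), ih, Nat.factorial_succ, mul_comm (x + 1),
      smoothPart_mul Y (Nat.factorial_ne_zero x) (Nat.succ_ne_zero x)]

theorem smoothPart_eq_self {Y : ℝ} {n : ℕ} (hn : n ≠ 0) (h : ∀ p ∈ n.primeFactors, (p : ℝ) ≤ Y) :
    smoothPart Y n = n := by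
  rw [smoothPart, filter_true_of_mem h]
  exact Nat.prod_factorization_pow_eq_self hn

theorem log_smoothPart (Y : ℝ) (n : ℕ) :
    log (smoothPart Y n) = ∑ p ∈ Nat.primesLE ⌊Y⌋₊, n.factorization p * log p := by
  rw [smoothPart_eq_prod_primesLE, Nat.cast_prod, log_prod fun p hp => by
    exact_mod_cast (pow_pos (Nat.mem_primesLE.1 hp).2.pos _).ne']
  simp only [Nat.cast_pow, Real.log_pow]

theorem Nat.Prime.div_le_factorization_factorial {p : ℕ} (hp : p.Prime) (n : ℕ) :
    n / p ≤ (n !).factorization p := by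
  rw [Nat.factorization_factorial hp (lt_add_of_pos_right _ two_pos)]
  simpa using single_le_sum (f := fun i => n / p ^ i) (fun _ _ => Nat.zero_le _)
    (mem_Ico.2 ⟨le_rfl, by omega⟩ : 1 ∈ Ico 1 (Nat.log p n + 2))

theorem Nat.Prime.mul_factorization_factorial_le {p : ℕ} (hp : p.Prime) (n : ℕ) :
    p * (n !).factorization p ≤ 2 * n := by
  have hp2 := hp.two_le
  calc p * (n !).factorization p ≤ 2 * ((p - 1) * (n !).factorization p) := by
        rw [← mul_assoc]; exact Nat.mul_le_mul_right _ (by omega)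
    _ ≤ 2 * n := by rw [Nat.sub_one_mul_factorization_factorial hp]; omega

theorem sum_primesLE_log_div_self_le (N : ℕ) :
    ∑ p ∈ Nat.primesLE N, log p / p ≤ log N + log 4 := by
  rcases N.eq_zero_or_pos with rfl | hN
  · simp only [Nat.primesLE_zero, sum_empty, Nat.cast_zero, log_zero, zero_add]; positivity
  have hlog_factorial : log (N ! : ℕ) = ∑ p ∈ Nat.primesLE N, (N !).factorization p * log p := by
    have hsmooth : smoothPart N N ! = N ! := by
      refine smoothPart_eq_self (Nat.factorial_ne_zero N) fun p hp => ?_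
      exact_mod_cast (Nat.prime_of_mem_primeFactors hp).dvd_factorial.1
        (Nat.dvd_of_mem_primeFactors hp)
    simpa [hsmooth] using log_smoothPart N (N !)
  have hN' : (0 : ℝ) < N := by exact_mod_cast hN
  refine le_of_mul_le_mul_left ?_ hN'
  calc (N : ℝ) * ∑ p ∈ Nat.primesLE N, log p / p
      = ∑ p ∈ Nat.primesLE N, ((N : ℝ) / p) * log p := by
        rw [mul_sum]; congr 1; ext p; ring
    _ ≤ ∑ p ∈ Nat.primesLE N, (((N / p : ℕ) : ℝ) + 1) * log p := by
        gcongr with p hp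
        rw [← Nat.floor_div_eq_div (K := ℝ)]
        exact (Nat.lt_floor_add_one _).le
    _ = ∑ p ∈ Nat.primesLE N, ((N / p : ℕ) : ℝ) * log p + Chebyshev.theta N := by
        simp only [add_mul, one_mul, sum_add_distrib, Chebyshev.theta_eq_sum_primesLE_log]
    _ ≤ log (N ! : ℕ) + log 4 * N := by
        rw [hlog_factorial]
        gcongr with p hp
        · exact_mod_cast (Nat.mem_primesLE.1 hp).2.div_le_factorization_factorial N
        · exact Chebyshev.theta_le_log4_mul_x hN'.le
    _ ≤ N * log N + log 4 * N := by
        gcongr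
        rw [← Real.log_pow]
        exact log_le_log (by positivity) (by exact_mod_cast Nat.factorial_le_pow N)
    _ = N * (log N + log 4) := by ring

theorem sum_log_smoothPart_Icc_le {Y : ℝ} (hY : 1 ≤ Y) (x : ℕ) :
    ∑ n ∈ Icc 1 x, log (smoothPart Y n) ≤ 2 * x * (log Y + log 4) := by
  rw [← log_prod fun n _ => by exact_mod_cast (smoothPart_pos Y n).ne', ← Nat.cast_prod,
    prod_smoothPart_Icc, log_smoothPart]
  calc ∑ p ∈ Nat.primesLE ⌊Y⌋₊, ((x !).factorization p : ℝ) * log p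
      ≤ ∑ p ∈ Nat.primesLE ⌊Y⌋₊, (2 * x / p) * log p := by
        gcongr with p hp
        have hprime := (Nat.mem_primesLE.1 hp).2
        rw [le_div_iff₀ (by exact_mod_cast hprime.pos), mul_comm]
        exact_mod_cast hprime.mul_factorization_factorial_le x
    _ = 2 * x * ∑ p ∈ Nat.primesLE ⌊Y⌋₊, log p / p := by
        rw [mul_sum]; congr 1; ext p; ring
    _ ≤ 2 * x * (log Y + log 4) := by
        gcongr
        refine (sum_primesLE_log_div_self_le _).trans (add_le_add_left ?_ _)
        exact log_le_log (by exact_mod_cast Nat.floor_pos.2 hY) (Nat.floor_le (by linarith))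

open scoped Classical in
theorem card_filter_rpow_le_smoothPart_div_le {Y E : ℝ} (hY : 4 ≤ Y) (hE : 0 < E) (x : ℕ) :
    (#{n ∈ Icc 1 x | Y ^ E ≤ (smoothPart Y n : ℝ)} : ℝ) / x ≤ 4 / E := by
  set A := {n ∈ Icc 1 x | Y ^ E ≤ (smoothPart Y n : ℝ)}
  have hlogY : 0 < log Y := log_pos (by linarith)
  have hlarge : ∀ n ∈ A, E * log Y ≤ log (smoothPart Y n) := fun n hn => by
    rw [← log_rpow (by linarith)]
    exact log_le_log (by positivity) (mem_filter.1 hn).2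
  have hcount : (#A : ℝ) * (E * log Y) ≤ 4 * x * log Y := calc
    (#A : ℝ) * (E * log Y) ≤ ∑ n ∈ A, log (smoothPart Y n) := by
      simpa using card_nsmul_le_sum A _ _ hlarge
    _ ≤ ∑ n ∈ Icc 1 x, log (smoothPart Y n) :=
      sum_le_sum_of_subset_of_nonneg (filter_subset _ _) fun n _ _ =>
        log_nonneg (by exact_mod_cast smoothPart_pos Y n)
    _ ≤ 2 * x * (log Y + log 4) := sum_log_smoothPart_Icc_le (by linarith) x
    _ ≤ 4 * x * log Y := by
      have : log 4 ≤ log Y := log_le_log (by norm_num) hY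
      nlinarith [(Nat.cast_nonneg x : (0 : ℝ) ≤ x)]
  rcases x.eq_zero_or_pos with rfl | hx
  · rw [Nat.cast_zero, div_zero]; positivity
  rw [div_le_div_iff₀ (by exact_mod_cast hx) hE]
  exact le_of_mul_le_mul_right (by rwa [mul_assoc]) hlogY

open scoped Classical in
/-- If `Y_x, E_x → ∞`, then the number of `n ≤ x` whose `Y_x`-smooth part is
at least `Y_x ^ E_x` is `o(x)`. -/
theorem smooth_part_large_density_zero (Y E : ℕ → ℝ)
    (hY : Tendsto Y atTop atTop) (hE : Tendsto E atTop atTop) :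
    Tendsto (fun x : ℕ =>
      (((Finset.Icc 1 x).filter (fun n =>
        (Y x) ^ (E x) ≤ (smoothPart (Y x) n : ℝ))).card : ℝ) / x)
      atTop (nhds 0) := by
  refine squeeze_zero' (g := fun x => 4 / E x) (Eventually.of_forall fun x => by positivity) ?_
    (tendsto_const_nhds.div_atTop hE)
  filter_upwards [hY.eventually_ge_atTop 4, hE.eventually_gt_atTop 0] with x hYx hEx
  exact card_filter_rpow_le_smoothPart_div_le hYx hEx x
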